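/- arXiv:1305.7447 — 3 statements merged into one kernel-verified Lean document; each statement's English description precedes it below -/
import Mathlib

section
/- Let (L,R) be a liftable pair of adjoint functors between braided monoidal categories C and D. Then there exists a functor L̲̄ : Bimon(D) ⥤ Bimon(C) commuting with the forgetful functors to monoid objects (i.e. U_Mon ∘ L̲̄ = L̄ ∘ U_Mon, where U_Mon denotes the forgetful functor from bimonoids to monoids), given on objects by L̲̄(H',Δ',ε') = (L̄H', ψ̄_{H',H'} ∘ L̄Δ', ψ̄₀ ∘ L̄ε'), where (ψ̄,ψ̄₀) is the oplax monoidal structure on L̄ induced by the adjunction L̄ ⊣ R̄; and there exists a functor R̲̄ : Bimon(C) ⥤ Bimon(D) commuting with the forgetful functors to comonoid objects (U_Comon ∘ R̲̄ = R̲ ∘ U_Comon), given on objects by R̲̄(H,m,u) = (R̲H, R̲m ∘ φ̲_{H,H}, R̲u ∘ φ̲₀), where (φ̲,φ̲₀) is the lax monoidal structure on R̲ induced by the adjunction L̲ ⊣ R̲. -/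
/-
L̄ is the left adjoint of the lax monoidal functor R̄, hence oplax monoidal, so it maps comonoids
in Mon(D), i.e. bimonoids, to comonoids in Mon(C). Dually R̲ is the right adjoint of the oplax
monoidal functor L̲, hence lax monoidal, so it maps monoids in Comon(C) to monoids in Comon(D);
through Bimon ≃ Mon(Comon) this is a functor on bimonoids over R̲. For any adjunction whose
(op)lax structures are compatible (`Adjunction.IsMonoidal`), the structure maps of each side are
the mates of those of the other, which yields the formulas for the (co)unit and (co)multiplication.
-/

open CategoryTheory Category MonoidalCategory Functor
open Functor.LaxMonoidal Functor.OplaxMonoidal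

section InducedStructures

variable {𝒞 : Type*} [Category 𝒞] [MonoidalCategory 𝒞]
  {𝒟 : Type*} [Category 𝒟] [MonoidalCategory 𝒟]

/-- The cotensorator of the oplax monoidal structure induced on a left adjoint `L` of a lax
monoidal functor `R`: `ψ_{X,Y} = β_{LX⊗LY} ∘ L(φ_{LX,LY}) ∘ L(α_X ⊗ α_Y)`. -/
def inducedOplaxδ (L : 𝒟 ⥤ 𝒞) (R : 𝒞 ⥤ 𝒟) (adj : L ⊣ R) [R.LaxMonoidal] (X Y : 𝒟) :
    L.obj (X ⊗ Y) ⟶ L.obj X ⊗ L.obj Y :=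
  L.map (adj.unit.app X ⊗ₘ adj.unit.app Y) ≫
    L.map (μ R (L.obj X) (L.obj Y)) ≫ adj.counit.app (L.obj X ⊗ L.obj Y)

/-- The counit of the oplax monoidal structure induced on a left adjoint `L` of a lax
monoidal functor `R`: `ψ₀ = β_I ∘ L(φ₀)`. -/
def inducedOplaxη (L : 𝒟 ⥤ 𝒞) (R : 𝒞 ⥤ 𝒟) (adj : L ⊣ R) [R.LaxMonoidal] :
    L.obj (𝟙_ 𝒟) ⟶ 𝟙_ 𝒞 :=
  L.map (ε R) ≫ adj.counit.app (𝟙_ 𝒞)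

/-- The tensorator of the lax monoidal structure induced on a right adjoint `R` of an oplax
monoidal functor `L`: `φ_{X,Y} = R(β_X ⊗ β_Y) ∘ R(ψ_{RX,RY}) ∘ α_{RX⊗RY}`. -/
def inducedLaxμ (L : 𝒟 ⥤ 𝒞) (R : 𝒞 ⥤ 𝒟) (adj : L ⊣ R) [L.OplaxMonoidal] (X Y : 𝒞) :
    R.obj X ⊗ R.obj Y ⟶ R.obj (X ⊗ Y) :=
  adj.unit.app (R.obj X ⊗ R.obj Y) ≫
    R.map (δ L (R.obj X) (R.obj Y)) ≫ R.map (adj.counit.app X ⊗ₘ adj.counit.app Y)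

/-- The unit of the lax monoidal structure induced on a right adjoint `R` of an oplax
monoidal functor `L`: `φ₀ = R(ψ₀) ∘ α_J`. -/
def inducedLaxε (L : 𝒟 ⥤ 𝒞) (R : 𝒞 ⥤ 𝒟) (adj : L ⊣ R) [L.OplaxMonoidal] :
    𝟙_ 𝒟 ⟶ R.obj (𝟙_ 𝒞) :=
  adj.unit.app (𝟙_ 𝒟) ≫ R.map (η L)

end InducedStructures

namespace CategoryTheory

namespace Adjunction

variable {𝒞 : Type*} [Category 𝒞] [MonoidalCategory 𝒞]
  {𝒟 : Type*} [Category 𝒟] [MonoidalCategory 𝒟]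
  {F : 𝒟 ⥤ 𝒞} {G : 𝒞 ⥤ 𝒟} (adj : F ⊣ G) [F.OplaxMonoidal] [G.LaxMonoidal] [adj.IsMonoidal]

lemma η_eq_inducedOplaxη : η F = inducedOplaxη F G adj :=
  adj.map_ε_comp_counit_app_unit.symm

lemma δ_eq_inducedOplaxδ (X Y : 𝒟) : δ F X Y = inducedOplaxδ F G adj X Y := by
  rw [inducedOplaxδ, map_μ_comp_counit_app_tensor]
  erw [← δ_natural_assoc, tensorHom_comp_tensorHom]
  simp

lemma ε_eq_inducedLaxε : ε G = inducedLaxε F G adj :=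
  IsMonoidal.leftAdjoint_ε

lemma μ_eq_inducedLaxμ (X Y : 𝒞) : μ G X Y = inducedLaxμ F G adj X Y := by
  rw [IsMonoidal.leftAdjoint_μ (adj := adj), G.map_comp]
  rfl

end Adjunction

lemma ComonObj.ext {C : Type*} [Category C] [MonoidalCategory C] {X : C} {c₁ c₂ : ComonObj X}
    (h_counit : c₁.counit = c₂.counit) (h_comul : c₁.comul = c₂.comul) : c₁ = c₂ := by
  cases c₁
  cases c₂
  congr

lemma Comon.eqToHom_hom {C : Type*} [Category C] [MonoidalCategory C] {A B : Comon C}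
    (h : A = B) : (eqToHom h).hom = eqToHom (congrArg Comon.X h) := by
  subst h
  rfl

namespace Bimon

variable {C : Type*} [Category C] [MonoidalCategory C] [BraidedCategory C]

-- `Bimon C` is a non-reducible synonym of `Comon (Mon C)`, hence the `erw`s here and below.
lemma ofMonComon_comp_toComon : ofMonComon C ⋙ toComon C = Mon.forget (Comon C) := by
  refine Functor.ext (fun M => ?_) (fun M N f => ?_)
  · exact congrArg (@Comon.mk _ _ _ M.X.X) (ComonObj.ext (comp_id _) (comp_id _))
  · ext
    simp only [Comon.comp_hom']
    erw [Comon.eqToHom_hom, Comon.eqToHom_hom, eqToHom_refl, eqToHom_refl, id_comp, comp_id]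
    rfl

end Bimon

namespace Functor

variable {C : Type*} [Category C] [MonoidalCategory C] [BraidedCategory C]
  {D : Type*} [Category D] [MonoidalCategory D] [BraidedCategory D]
  (G : Comon C ⥤ Comon D) [G.LaxMonoidal]

def mapBimon : Bimon C ⥤ Bimon D :=
  Bimon.toMonComon C ⋙ G.mapMon ⋙ Bimon.ofMonComon D

lemma mapBimon_comp_toComon : G.mapBimon ⋙ Bimon.toComon D = Bimon.toComon C ⋙ G := by
  change Bimon.toMonComon C ⋙ G.mapMon ⋙ (Bimon.ofMonComon D ⋙ Bimon.toComon D) = _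
  rw [Bimon.ofMonComon_comp_toComon]
  rfl

lemma mapBimon_one (H : Bimon C) :
    ((Bimon.toMonComon D).obj (G.mapBimon.obj H)).mon.one =
      ε G ≫ G.map ((Bimon.toMonComon C).obj H).mon.one ≫
        eqToHom (congr_obj G.mapBimon_comp_toComon H).symm := by
  ext
  simp only [Comon.comp_hom']
  erw [Comon.eqToHom_hom, eqToHom_refl, comp_id]
  exact id_comp _

lemma mapBimon_mul (H : Bimon C) :
    ((Bimon.toMonComon D).obj (G.mapBimon.obj H)).mon.mul =
      eqToHom (congrArg (fun X => X ⊗ X) (congr_obj G.mapBimon_comp_toComon H)) ≫ μ G _ _ ≫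
        G.map ((Bimon.toMonComon C).obj H).mon.mul ≫
        eqToHom (congr_obj G.mapBimon_comp_toComon H).symm := by
  ext
  simp only [Comon.comp_hom']
  erw [Comon.eqToHom_hom, Comon.eqToHom_hom, eqToHom_refl, eqToHom_refl, id_comp, comp_id]
  exact id_comp _

end Functor

end CategoryTheory

/-- for a liftable pair `(L,R)` of adjoint functors between braided monoidal
categories (`R` braided lax monoidal, `L` carrying the corresponding oplax structure, `R̄ ⊣`
having a left adjoint `L̄` on monoids and `L̲` having a right adjoint `R̲` on comonoids),
there is an induced functor `L̲̄` on bimonoids commuting with the forgetful functor to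
monoids and given by `L̲̄(H',Δ',ε') = (L̄H', ψ̄ ∘ L̄Δ', ψ̄₀ ∘ L̄ε')`, and an induced functor
`R̲̄` on bimonoids commuting with the forgetful functor to comonoids and given by
`R̲̄(H,m,u) = (R̲H, R̲m ∘ φ̲, R̲u ∘ φ̲₀)`. -/
theorem liftable_pair_induces_bimonoid_functors
    {C : Type*} [Category C] [MonoidalCategory C] [BraidedCategory C]
    {D : Type*} [Category D] [MonoidalCategory D] [BraidedCategory D]
    (L : D ⥤ C) (R : C ⥤ D)
    [R.LaxMonoidal] [L.OplaxMonoidal]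
    -- liftability data
    (Lbar : Mon D ⥤ Mon C) (adjM : Lbar ⊣ R.mapMon)
    (Rlow : Comon C ⥤ Comon D) (adjC : L.mapComon ⊣ Rlow)
    -- the induced lax monoidal structure on `R̄ = R.mapMon`
    [(R.mapMon).LaxMonoidal]
    -- the induced oplax monoidal structure on `L̲ = L.mapComon`
    [(L.mapComon).OplaxMonoidal] :
    (∃ (LBB : Bimon D ⥤ Bimon C)
        (hX : ∀ H' : Bimon D, (LBB.obj H').X = Lbar.obj H'.X),
      (LBB ⋙ Bimon.toMon C = Bimon.toMon D ⋙ Lbar) ∧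
      (∀ H' : Bimon D, (LBB.obj H').comon.counit =
        eqToHom (hX H') ≫ Lbar.map H'.comon.counit ≫ inducedOplaxη Lbar R.mapMon adjM) ∧
      (∀ H' : Bimon D, (LBB.obj H').comon.comul =
        eqToHom (hX H') ≫ Lbar.map H'.comon.comul ≫ inducedOplaxδ Lbar R.mapMon adjM H'.X H'.X ≫
          eqToHom (show Lbar.obj H'.X ⊗ Lbar.obj H'.X = (LBB.obj H').X ⊗ (LBB.obj H').X from by
            rw [hX H']))) ∧
    (∃ (RBB : Bimon C ⥤ Bimon D)
        (hX : ∀ H : Bimon C,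
          (Bimon.toComon D).obj (RBB.obj H) = Rlow.obj ((Bimon.toComon C).obj H)),
      (RBB ⋙ Bimon.toComon D = Bimon.toComon C ⋙ Rlow) ∧
      (∀ H : Bimon C, ((Bimon.toMonComon D).obj (RBB.obj H)).mon.one =
        inducedLaxε (L.mapComon) Rlow adjC ≫
          Rlow.map ((Bimon.toMonComon C).obj H).mon.one ≫
            eqToHom (show Rlow.obj ((Bimon.toComon C).obj H) =
                ((Bimon.toMonComon D).obj (RBB.obj H)).X from by
              rw [show ((Bimon.toMonComon D).obj (RBB.obj H)).X =
                  (Bimon.toComon D).obj (RBB.obj H) from rfl, hX H])) ∧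
      (∀ H : Bimon C, ((Bimon.toMonComon D).obj (RBB.obj H)).mon.mul =
        eqToHom (show ((Bimon.toMonComon D).obj (RBB.obj H)).X ⊗
              ((Bimon.toMonComon D).obj (RBB.obj H)).X =
            Rlow.obj ((Bimon.toComon C).obj H) ⊗ Rlow.obj ((Bimon.toComon C).obj H) from by
          rw [show ((Bimon.toMonComon D).obj (RBB.obj H)).X =
              (Bimon.toComon D).obj (RBB.obj H) from rfl, hX H]) ≫
          inducedLaxμ (L.mapComon) Rlow adjC
              ((Bimon.toComon C).obj H) ((Bimon.toComon C).obj H) ≫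
            Rlow.map ((Bimon.toMonComon C).obj H).mon.mul ≫
              eqToHom (show Rlow.obj ((Bimon.toComon C).obj H) =
                  ((Bimon.toMonComon D).obj (RBB.obj H)).X from by
                rw [show ((Bimon.toMonComon D).obj (RBB.obj H)).X =
                    (Bimon.toComon D).obj (RBB.obj H) from rfl, hX H]))) := by
  let := adjM.leftAdjointOplaxMonoidal
  let := adjC.rightAdjointLaxMonoidal
  refine ⟨⟨Lbar.mapComon, fun _ => rfl, rfl, fun H' => ?_, fun H' => ?_⟩,
    ⟨Rlow.mapBimon, congr_obj Rlow.mapBimon_comp_toComon, Rlow.mapBimon_comp_toComon,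
      fun H => ?_, fun H => ?_⟩⟩
  · show Lbar.map _ ≫ η Lbar = 𝟙 _ ≫ _
    rw [id_comp, adjM.η_eq_inducedOplaxη]
  · show Lbar.map _ ≫ δ Lbar _ _ = 𝟙 _ ≫ _ ≫ _ ≫ 𝟙 _
    rw [id_comp, comp_id, adjM.δ_eq_inducedOplaxδ]
  · rw [Rlow.mapBimon_one, adjC.ε_eq_inducedLaxε]
    rfl
  · rw [Rlow.mapBimon_mul, adjC.μ_eq_inducedLaxμ]
    rfl
end

section
/- Let k be a field, G a group with identity e, H a Hopf algebra over k, and ℬ : G → Submodule k H a Hopf G-algebra structure on H. Then every primitive element of H is concentrated in degree e: if x ∈ H satisfies Δ(x) = 1 ⊗ x + x ⊗ 1, then x ∈ ℬ e. -/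
open scoped TensorProduct

/-- A Hopf `G`-algebra structure on a Hopf algebra `H` over `k`: an internal grading
`ℬ : G → Submodule k H` making `H` a `G`-graded algebra, such that each homogeneous part
is a subcoalgebra and the antipode maps the degree `g` part into the degree `g⁻¹` part. -/
structure HopfGAlgebraStruct (k : Type*) [Field k] (G : Type*) [Group G] [DecidableEq G]
    (H : Type*) [Ring H] [HopfAlgebra k H] (ℬ : G → Submodule k H) : Prop where
  internal : DirectSum.IsInternal ℬ
  one_mem : (1 : H) ∈ ℬ (1 : G)
  mul_mem : ∀ {g h : G} {x y : H}, x ∈ ℬ g → y ∈ ℬ h → x * y ∈ ℬ (g * h)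
  comul_mem : ∀ (g : G), ∀ x ∈ ℬ g,
    (Coalgebra.comul (R := k) (A := H)) x ∈
      LinearMap.range (TensorProduct.map (ℬ g).subtype (ℬ g).subtype)
  antipode_mem : ∀ (g : G), ∀ x ∈ ℬ g, HopfAlgebra.antipode (R := k) x ∈ ℬ g⁻¹

/-!
Let `x` be primitive and `g ≠ 1`. Apply `π_g ⊗ π_1` to `Δ x = 1 ⊗ x + x ⊗ 1`, where `π_h`
is the projection onto the degree `h` part. Since every homogeneous part is a subcoalgebra,
`Δ` maps degree `h` into `ℬ h ⊗ ℬ h`, which `π_g ⊗ π_1` kills for `g ≠ 1`; on the right-hand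
side only `π_g x ⊗ 1` survives, because `1` has degree `1`. Hence `π_g x ⊗ 1 = 0`, and applying
the counit to the second factor gives `π_g x = 0`.
-/

open LinearMap

namespace DirectSum

variable {ι R M : Type*} [DecidableEq ι] [CommSemiring R] [AddCommMonoid M] [Module R M]
  (ℳ : ι → Submodule R M) [Decomposition ℳ]

theorem mem_of_decompose_eq_zero_of_ne {x : M} {i : ι}
    (h : ∀ j ≠ i, (decompose ℳ x j : M) = 0) : x ∈ ℳ i := by
  classical
  rw [← sum_support_decompose ℳ x]
  refine Submodule.sum_mem _ fun j _ ↦ ?_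
  obtain rfl | hj := eq_or_ne j i
  · exact (decompose ℳ x j).2
  · rw [h j hj]
    exact zero_mem _

noncomputable def projₗ (i : ι) : M →ₗ[R] M :=
  (ℳ i).subtype ∘ₗ component R ι (fun i ↦ ℳ i) i ∘ₗ (decomposeLinearEquiv ℳ).toLinearMap

@[simp]
theorem projₗ_apply (i : ι) (x : M) : projₗ ℳ i x = decompose ℳ x i := rfl

theorem projₗ_comp_subtype_of_ne {i j : ι} (h : i ≠ j) : projₗ ℳ j ∘ₗ (ℳ i).subtype = 0 := by
  ext x
  simp [of_eq_of_ne _ _ _ h.symm]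

theorem map_projₗ_eq_zero_of_mem_range_map_subtype {i a b : ι} (hab : a ≠ b) {t : M ⊗[R] M}
    (ht : t ∈ range (TensorProduct.map (ℳ i).subtype (ℳ i).subtype)) :
    TensorProduct.map (projₗ ℳ a) (projₗ ℳ b) t = 0 := by
  obtain ⟨s, rfl⟩ := ht
  rw [← comp_apply, ← TensorProduct.map_comp]
  obtain rfl | hia := eq_or_ne i a
  · rw [projₗ_comp_subtype_of_ne ℳ hab, TensorProduct.map_zero_right, LinearMap.zero_apply]
  · rw [projₗ_comp_subtype_of_ne ℳ hia, TensorProduct.map_zero_left, LinearMap.zero_apply]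

theorem map_projₗ_comul_eq_zero {C : Type*} [AddCommMonoid C] [Module R C] [Coalgebra R C]
    (𝒞 : ι → Submodule R C) [Decomposition 𝒞]
    (h𝒞 : ∀ i, ∀ x ∈ 𝒞 i,
      Coalgebra.comul (R := R) x ∈ range (TensorProduct.map (𝒞 i).subtype (𝒞 i).subtype))
    {a b : ι} (hab : a ≠ b) (x : C) :
    TensorProduct.map (projₗ 𝒞 a) (projₗ 𝒞 b) (Coalgebra.comul (R := R) x) = 0 := by
  classical
  rw [← sum_support_decompose 𝒞 x, map_sum, map_sum]
  exact Finset.sum_eq_zero fun i _ ↦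
    map_projₗ_eq_zero_of_mem_range_map_subtype 𝒞 hab (h𝒞 i _ (decompose 𝒞 x i).2)

end DirectSum

theorem Bialgebra.eq_zero_of_tmul_one_eq_zero {R A : Type*} [CommSemiring R] [Semiring A]
    [Bialgebra R A] {a : A} (h : a ⊗ₜ[R] (1 : A) = 0) : a = 0 := by
  simpa using congr(_root_.TensorProduct.rid R A (lTensor A (Coalgebra.counit (R := R)) $h))

open DirectSum in
/-- every primitive element of a Hopf `G`-algebra is concentrated in
degree `e` (the identity of the group `G`). -/
theorem primitive_mem_identity_component
    (k : Type*) [Field k] (G : Type*) [Group G] [DecidableEq G]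
    (H : Type*) [Ring H] [HopfAlgebra k H] (ℬ : G → Submodule k H)
    (hH : HopfGAlgebraStruct k G H ℬ) (x : H)
    (hx : Coalgebra.comul (R := k) x = 1 ⊗ₜ[k] x + x ⊗ₜ[k] 1) :
    x ∈ ℬ (1 : G) := by
  let := hH.internal.chooseDecomposition
  refine mem_of_decompose_eq_zero_of_ne ℬ fun g hg ↦
    Bialgebra.eq_zero_of_tmul_one_eq_zero (R := k) ?_
  have h := congr(TensorProduct.map (projₗ ℬ g) (projₗ ℬ 1) $hx)
  rwa [map_projₗ_comul_eq_zero ℬ hH.comul_mem hg, map_add, TensorProduct.map_tmul,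
    TensorProduct.map_tmul, projₗ_apply ℬ g 1, decompose_of_mem_ne ℬ hH.one_mem hg.symm,
    projₗ_apply ℬ 1 1, decompose_of_mem_same ℬ hH.one_mem, TensorProduct.zero_tmul, zero_add,
    eq_comm] at h
end

section
/- Let k be a field, G a group with identity e, H a Hopf algebra over k, and ℬ : G → Submodule k H a Hopf G-algebra structure on H. For k-linear functionals f, t : H → k define their convolution f*t : H → k by (f*t)(x) = (f ⊗ t)(Δ(x)) (i.e. f*t = mult_k ∘ (f ⊗ t) ∘ Δ). Suppose t : H → k is k-linear, vanishes on ℬ g for every g ≠ e, and satisfies (f*t)(x) = f(1)·t(x) for every k-linear f : H → k and every x ∈ ℬ e (i.e. the restriction of t to ℬ e is a left integral on the Hopf subalgebra ℬ e). Then t is a left integral on H: f*t = f(1)·t for every k-linear functional f : H → k. -/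
open scoped TensorProduct

/-- The convolution product of two `k`-linear functionals on a coalgebra `H`:
`(f * t)(x) = (f ⊗ t)(Δ x)`. -/
noncomputable def convFunctional (k : Type*) [Field k] (H : Type*) [Ring H] [HopfAlgebra k H]
    (f t : H →ₗ[k] k) : H →ₗ[k] k :=
  (LinearMap.mul' k k) ∘ₗ (TensorProduct.map f t) ∘ₗ (Coalgebra.comul (R := k) (A := H))

/-- if `t` vanishes on every homogeneous component `ℬ g` with `g ≠ e` and
its restriction to `ℬ e` is a left integral on the Hopf subalgebra `ℬ e`
(i.e. `(f * t)(x) = f(1) t(x)` for all functionals `f` and all `x ∈ ℬ e`),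
then `t` is a left integral on `H`: `f * t = f(1) • t` for every functional `f`. -/
theorem integral_of_identity_component_integral
    (k : Type*) [Field k] (G : Type*) [Group G] [DecidableEq G]
    (H : Type*) [Ring H] [HopfAlgebra k H] (ℬ : G → Submodule k H)
    (hH : HopfGAlgebraStruct k G H ℬ)
    (t : H →ₗ[k] k)
    (hvanish : ∀ g : G, g ≠ 1 → ∀ x ∈ ℬ g, t x = 0)
    (hint : ∀ (f : H →ₗ[k] k), ∀ x ∈ ℬ (1 : G),
      convFunctional k H f t x = f 1 * t x) :
    ∀ f : H →ₗ[k] k, convFunctional k H f t = f 1 • t := by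
  intro f
  have htop : (⨆ g, ℬ g) = ⊤ := hH.internal.submodule_iSup_eq_top
  ext x
  have hx : x ∈ ⨆ g, ℬ g := htop ▸ Submodule.mem_top
  simp only [LinearMap.smul_apply, smul_eq_mul]
  induction hx using Submodule.iSup_induction' with
  | mem g x hxg =>
    by_cases hg : g = 1
    · subst hg; exact hint f x hxg
    · rw [hvanish g hg x hxg, mul_zero]
      obtain ⟨y, hy⟩ := hH.comul_mem g x hxg
      simp only [convFunctional, LinearMap.comp_apply, ← hy]
      clear hy
      induction y using TensorProduct.induction_on with
      | zero => simp
      | tmul a b => simp [hvanish g hg b b.2]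
      | add u v hu hv => simp [map_add, hu, hv]
  | zero => simp
  | add x y _ _ hx hy => simp [map_add, hx, hy, mul_add]
end
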